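/- arXiv:2504.21244 — 3 statements merged into one kernel-verified Lean document; each statement's English description precedes it below -/
import Mathlib

section
/- Let G be a connected graph on n vertices. For each vertex w, let H_w be the entropy of the empirical distribution of shortest-path distances from w, i.e., H_w = -∑_{t=0}^{Diam(G)} (|V_t(w)|/n) log(|V_t(w)|/n) where V_t(w) is the set of vertices at distance exactly t from w. If H_w ≤ H_max for all w, then the metric dimension of G is at least (log n)/H_max. -/
open scoped Classical

noncomputable def metricDim {V : Type*} [Fintype V] (G : SimpleGraph V) : ℕ :=
  sInf {k | ∃ W : Finset V, W.card = k ∧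
    ∀ u v : V, u ≠ v → ∃ w ∈ W, G.dist u w ≠ G.dist v w}

open Finset Real

/-!
The vector of distances to a resolving set `W` determines a vertex, so the uniform distribution
on `V`, of entropy `log n`, is the joint law of the distances `d(w, ·)`, `w ∈ W`. Subadditivity
of entropy bounds `log n` by the sum of the entropies `H_w ≤ H_max` of the marginals, whence
`log n ≤ |W| H_max`. Subadditivity follows from Gibbs' inequality against the product
`q v = ∏_w p_w (d(w, v))` of the marginals, which has total mass at most `1` by injectivity.
-/

section EmpiricalEntropy

variable {V β : Type*} [Fintype V] [DecidableEq β]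

noncomputable def fiberFrac (f : V → β) (b : β) : ℝ :=
  (#{v | f v = b} : ℝ) / Fintype.card V

lemma fiberFrac_nonneg (f : V → β) (b : β) : 0 ≤ fiberFrac f b := by
  unfold fiberFrac; positivity

lemma fiberFrac_apply_pos (f : V → β) (v : V) : 0 < fiberFrac f (f v) := by
  have hv : v ∈ ({u | f u = f v} : Finset V) := by simp
  have : 0 < Fintype.card V := Fintype.card_pos_iff.mpr ⟨v⟩
  unfold fiberFrac
  exact div_pos (by exact_mod_cast card_pos.mpr ⟨v, hv⟩) (by exact_mod_cast this)

lemma sum_fiberFrac {f : V → β} {s : Finset β} (hs : ∀ v, f v ∈ s) [Nonempty V] :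
    ∑ b ∈ s, fiberFrac f b = 1 := by
  have hcard : ∑ b ∈ s, #{v | f v = b} = Fintype.card V :=
    (card_eq_sum_card_fiberwise fun v _ => hs v).symm
  have : (0 : ℝ) < Fintype.card V := by exact_mod_cast Fintype.card_pos
  unfold fiberFrac
  rw [← sum_div, div_eq_one_iff_eq this.ne']
  exact_mod_cast hcard

lemma sum_log_fiberFrac {f : V → β} {s : Finset β} (hs : ∀ v, f v ∈ s) :
    ∑ v, log (fiberFrac f (f v)) = - Fintype.card V * ∑ b ∈ s, negMulLog (fiberFrac f b) := by
  rw [← sum_fiberwise_of_maps_to (fun v _ => hs v), mul_sum]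
  refine sum_congr rfl fun b _ => ?_
  rw [sum_congr rfl fun v hv => by rw [(mem_filter.mp hv).2], sum_const, nsmul_eq_mul]
  rcases (Fintype.card V).eq_zero_or_pos with hV | hV
  · simp [fiberFrac, hV]
  · have hcard : (#{v | f v = b} : ℝ) = Fintype.card V * fiberFrac f b := by
      unfold fiberFrac; field_simp
    rw [hcard, negMulLog]; ring

end EmpiricalEntropy

lemma card_mul_log_card_le_neg_sum_log {ι : Type*} [Fintype ι] {q : ι → ℝ}
    (hq : ∀ i, 0 < q i) (hsum : ∑ i, q i ≤ 1) :
    Fintype.card ι * log (Fintype.card ι) ≤ - ∑ i, log (q i) := by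
  rcases isEmpty_or_nonempty ι with _ | _
  · simp
  set n : ℝ := (Fintype.card ι : ℝ)
  have hn : 0 < n := by positivity
  have hlog : ∀ i, n.log + log (q i) ≤ n * q i - 1 := fun i => by
    rw [← log_mul hn.ne' (hq i).ne']
    exact log_le_sub_one_of_pos (mul_pos hn (hq i))
  have := sum_le_sum fun i (_ : i ∈ univ) => hlog i
  rw [sum_add_distrib, sum_sub_distrib, ← mul_sum] at this
  simp only [sum_const, card_univ, nsmul_eq_mul] at this
  nlinarith

lemma sum_prod_le_one_of_injective {V ι β : Type*} [Fintype V] [Fintype ι] [DecidableEq ι]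
    {F : V → ι → β} (hF : Function.Injective F) {s : Finset β} (hs : ∀ v i, F v i ∈ s)
    {p : ι → β → ℝ} (hp : ∀ i b, 0 ≤ p i b) (hp1 : ∀ i, ∑ b ∈ s, p i b = 1) :
    ∑ v, ∏ i, p i (F v i) ≤ 1 := by
  calc ∑ v, ∏ i, p i (F v i) = ∑ f ∈ univ.image F, ∏ i, p i (f i) :=
        (sum_image (f := fun f => ∏ i, p i (f i)) fun _ _ _ _ h => hF h).symm
    _ ≤ ∑ f ∈ Fintype.piFinset fun _ => s, ∏ i, p i (f i) := by
        refine sum_le_sum_of_subset_of_nonneg ?_ fun f _ _ => prod_nonneg fun i _ => hp i _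
        intro f hf
        obtain ⟨v, -, rfl⟩ := mem_image.mp hf
        exact Fintype.mem_piFinset.mpr (hs v)
    _ = ∏ i, ∑ b ∈ s, p i b := (prod_univ_sum _ _).symm
    _ = 1 := by simp only [hp1, prod_const_one]

theorem log_card_le_sum_entropy_of_injective {V ι β : Type*} [Fintype V] [Fintype ι]
    [DecidableEq ι] [DecidableEq β] {F : V → ι → β} (hF : Function.Injective F)
    {s : Finset β} (hs : ∀ v i, F v i ∈ s) :
    log (Fintype.card V) ≤ ∑ i, ∑ b ∈ s, negMulLog (fiberFrac (fun v => F v i) b) := by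
  rcases isEmpty_or_nonempty V with _ | _
  · simp [fiberFrac]
  set q : V → ℝ := fun v => ∏ i, fiberFrac (fun v => F v i) (F v i)
  have hq : ∀ v, 0 < q v := fun v => prod_pos fun i _ => fiberFrac_apply_pos (fun v => F v i) v
  have hsum : ∑ v, q v ≤ 1 := sum_prod_le_one_of_injective hF hs
    (fun i => fiberFrac_nonneg _) (fun i => sum_fiberFrac fun v => hs v i)
  have hlogq : - ∑ v, log (q v)
      = Fintype.card V * ∑ i, ∑ b ∈ s, negMulLog (fiberFrac (fun v => F v i) b) := by
    simp only [q, log_prod fun i _ => (fiberFrac_apply_pos (fun v => F v i) _).ne']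
    rw [sum_comm, mul_sum, ← sum_neg_distrib]
    refine sum_congr rfl fun i _ => ?_
    rw [sum_log_fiberFrac fun v => hs v i]
    ring
  have hn : (0 : ℝ) < Fintype.card V := by exact_mod_cast Fintype.card_pos
  have := card_mul_log_card_le_neg_sum_log hq hsum
  rw [hlogq] at this
  exact le_of_mul_le_mul_left this hn

namespace SimpleGraph

variable {V : Type*} {G : SimpleGraph V}

lemma Connected.exists_resolving_card_eq_metricDim [Fintype V] (hG : G.Connected) :
    ∃ W : Finset V, W.card = metricDim G ∧
      ∀ u v : V, u ≠ v → ∃ w ∈ W, G.dist u w ≠ G.dist v w := by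
  refine Nat.sInf_mem (s := {k | ∃ W : Finset V, W.card = k ∧ _})
    ⟨_, univ, rfl, fun u v huv => ⟨u, mem_univ u, ?_⟩⟩
  rw [dist_self]
  exact fun h => huv (hG.dist_eq_zero_iff.mp h.symm).symm

lemma injective_dist_of_resolving {W : Finset V}
    (hW : ∀ u v : V, u ≠ v → ∃ w ∈ W, G.dist u w ≠ G.dist v w) :
    Function.Injective fun (v : V) (w : W) => G.dist w v := by
  intro u v huv
  by_contra hne
  obtain ⟨w, hw, hd⟩ := hW u v hne
  exact hd (by simpa only [dist_comm] using congrFun huv ⟨w, hw⟩)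

end SimpleGraph

/-- **Entropic lower bound on metric dimension.** If for every vertex `w` the
entropy of the empirical distribution of distances from `w` is at most `Hmax`,
then `MD(G) ≥ (log n) / Hmax`. -/
theorem stmt_1 {V : Type*} [Fintype V] (G : SimpleGraph V) (hG : G.Connected)
    (Hmax : ℝ) (hHmax : 0 < Hmax)
    (hent : ∀ w : V,
      (- ∑ t ∈ Finset.range (G.diam + 1),
        (((Finset.univ.filter fun v : V => G.dist w v = t).card : ℝ) / Fintype.card V) *
          Real.log
            (((Finset.univ.filter fun v : V => G.dist w v = t).card : ℝ) / Fintype.card V))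
        ≤ Hmax) :
    Real.log (Fintype.card V) / Hmax ≤ (metricDim G : ℝ) := by
  have : Nonempty V := hG.nonempty
  have hdiam : G.ediam ≠ ⊤ := G.connected_iff_ediam_ne_top.mp hG
  obtain ⟨W, hWcard, hW⟩ := hG.exists_resolving_card_eq_metricDim
  have hrange : ∀ (v : V) (w : W), G.dist w v ∈ range (G.diam + 1) :=
    fun v w => mem_range.mpr (Nat.lt_succ_of_le (G.dist_le_diam hdiam))
  have hH : ∀ w : V,
      ∑ t ∈ range (G.diam + 1), negMulLog (fiberFrac (G.dist w) t) ≤ Hmax :=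
    fun w => by simpa only [fiberFrac, negMulLog_eq_neg, sum_neg_distrib] using hent w
  calc log (Fintype.card V) / Hmax
      ≤ (∑ w : W, ∑ t ∈ range (G.diam + 1), negMulLog (fiberFrac (G.dist w) t)) / Hmax :=
        div_le_div_of_nonneg_right
          (log_card_le_sum_entropy_of_injective (G.injective_dist_of_resolving hW) hrange)
          hHmax.le
    _ ≤ (∑ _w : W, Hmax) / Hmax := by gcongr with w; exact hH w
    _ = metricDim G := by simp [hWcard, hHmax.ne']
end

section
/- For any connected graph G on n vertices with diameter Diam ≥ 2, n ≤ Diam^{MD(G)} + MD(G). -/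
namespace SimpleGraph

variable {V : Type*} {G : SimpleGraph V}

variable (G) in
def IsResolvingSet (W : Finset V) : Prop :=
  ∀ u v : V, u ≠ v → ∃ w ∈ W, G.dist u w ≠ G.dist v w

lemma IsResolvingSet.injective_dist {W : Finset V} (hW : G.IsResolvingSet W) :
    Function.Injective fun (v : V) (w : W) => G.dist v w := by
  intro u v huv
  by_contra hne
  obtain ⟨w, hw, hdist⟩ := hW u v hne
  exact hdist (congrFun huv ⟨w, hw⟩)

lemma Connected.isResolvingSet_univ [Fintype V] (hG : G.Connected) :
    G.IsResolvingSet Finset.univ := fun u v huv =>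
  ⟨u, Finset.mem_univ u, by rw [dist_self]; exact (hG.pos_dist_of_ne huv.symm).ne⟩

lemma Connected.exists_isResolvingSet_card_eq_metricDim [Fintype V] (hG : G.Connected) :
    ∃ W : Finset V, G.IsResolvingSet W ∧ W.card = metricDim G := by
  have hne : {k | ∃ W : Finset V, W.card = k ∧ G.IsResolvingSet W}.Nonempty :=
    ⟨_, Finset.univ, rfl, hG.isResolvingSet_univ⟩
  obtain ⟨W, hcard, hW⟩ := Nat.sInf_mem hne
  exact ⟨W, hW, hcard⟩

lemma IsResolvingSet.card_le [Fintype V] (hG : G.Connected) {W : Finset V}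
    (hW : G.IsResolvingSet W) : Fintype.card V ≤ G.diam ^ W.card + W.card := by
  classical
  have hfin : G.ediam ≠ ⊤ := by
    have := hG.nonempty
    exact connected_iff_ediam_ne_top.mp hG
  have hmaps : Set.MapsTo (fun (v : V) (w : W) => G.dist v w) ↑(Finset.univ \ W)
      ↑(Fintype.piFinset fun _ : W => Finset.Icc 1 G.diam) := by
    intro v hv
    rw [Finset.mem_coe, Fintype.mem_piFinset]
    intro w
    have hvw : v ≠ w := fun h => (Finset.mem_sdiff.mp hv).2 (h ▸ w.2)
    exact Finset.mem_Icc.mpr ⟨hG.pos_dist_of_ne hvw, dist_le_diam hfin⟩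
  calc Fintype.card V = (Finset.univ \ W).card + W.card := by
        rw [Finset.card_sdiff_add_card_eq_card (Finset.subset_univ W), Finset.card_univ]
    _ ≤ (Fintype.piFinset fun _ : W => Finset.Icc 1 G.diam).card + W.card := by
        gcongr
        exact Finset.card_le_card_of_injOn _ hmaps hW.injective_dist.injOn
    _ = G.diam ^ W.card + W.card := by simp

end SimpleGraph

theorem stmt_3_general {V : Type*} [Fintype V] (G : SimpleGraph V) (hG : G.Connected) :
    Fintype.card V ≤ G.diam ^ metricDim G + metricDim G := by
  obtain ⟨W, hW, hcard⟩ := hG.exists_isResolvingSet_card_eq_metricDim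
  exact hcard ▸ hW.card_le hG

/-- For any connected graph on `n` vertices with diameter `Diam ≥ 2`,
`n ≤ Diam ^ MD(G) + MD(G)`. -/
theorem stmt_3 {V : Type*} [Fintype V] (G : SimpleGraph V) (hG : G.Connected)
    (hdiam : 2 ≤ G.diam) :
    Fintype.card V ≤ G.diam ^ metricDim G + metricDim G :=
  stmt_3_general G hG
end

section
/- Let G be a graph on n vertices such that for every pair of distinct vertices u, v the set S(u,v) = {w : d(u,w) ≠ d(v,w)} satisfies |S(u,v)| ≥ σn for some σ ∈ (0,1). Then MD(G) ≤ ⌈2 log n / (-log(1-σ))⌉. -/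
/-!
Pick `k` landmarks independently and uniformly at random. A fixed pair `u ≠ v` is missed by a
single landmark with probability at most `1 - σ`, hence by all of them with probability at most
`(1 - σ) ^ k ≤ n⁻²` for the given `k`. A union bound over the fewer than `n²` pairs shows that
some choice of landmarks separates every pair.
-/

open scoped Classical

open Finset

namespace SimpleGraph

variable {V : Type*} [Fintype V] (G : SimpleGraph V)

def IsResolving (W : Finset V) : Prop :=
  ∀ u v : V, u ≠ v → ∃ w ∈ W, G.dist u w ≠ G.dist v w

noncomputable def equidistantFinset (u v : V) : Finset V :=
  univ.filter fun w => G.dist u w = G.dist v w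

theorem metricDim_le_card {W : Finset V} (hW : G.IsResolving W) : metricDim G ≤ #W :=
  Nat.sInf_le ⟨W, rfl, hW⟩

theorem card_equidistantFinset_le {σ : ℝ} {u v : V}
    (hsep : σ * Fintype.card V ≤ (#(univ.filter fun w => G.dist u w ≠ G.dist v w) : ℝ)) :
    (#(G.equidistantFinset u v) : ℝ) ≤ (1 - σ) * Fintype.card V := by
  have hsplit : #(G.equidistantFinset u v) + #(univ.filter fun w => G.dist u w ≠ G.dist v w)
      = Fintype.card V := card_filter_add_card_filter_not _
  have : (#(G.equidistantFinset u v) : ℝ) + #(univ.filter fun w => G.dist u w ≠ G.dist v w)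
      = Fintype.card V := by exact_mod_cast hsplit
  linarith

end SimpleGraph

-- The union bound of the probabilistic method, phrased as a count of `k`-tuples.
theorem exists_fun_forall_exists_notMem {ι α : Type*} [Fintype α] (s : Finset ι)
    (B : ι → Finset α) (k : ℕ) (h : ∑ i ∈ s, #(B i) ^ k < Fintype.card α ^ k) :
    ∃ f : Fin k → α, ∀ i ∈ s, ∃ j, f j ∉ B i := by
  set bad := s.biUnion fun i => Fintype.piFinset fun _ : Fin k => B i
  have hbad : #bad < #(univ : Finset (Fin k → α)) :=
    calc #bad ≤ ∑ i ∈ s, #(Fintype.piFinset fun _ : Fin k => B i) := card_biUnion_le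
      _ = ∑ i ∈ s, #(B i) ^ k := by simp only [Fintype.card_piFinset, prod_const, card_univ,
          Fintype.card_fin]
      _ < #(univ : Finset (Fin k → α)) := by simpa only [card_univ, Fintype.card_fun,
          Fintype.card_fin] using h
  obtain ⟨f, -, hf⟩ := exists_mem_notMem_of_card_lt_card hbad
  refine ⟨f, fun i hi => ?_⟩
  by_contra! hall
  exact hf (mem_biUnion.mpr ⟨i, hi, Fintype.mem_piFinset.mpr hall⟩)

theorem sum_pow_lt_pow_of_le_mul {ι : Type*} {s : Finset ι} {c : ι → ℕ} {n k : ℕ} {a : ℝ}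
    (hn : 0 < n) (hc : ∀ i ∈ s, (c i : ℝ) ≤ a * n) (hk : a ^ k * #s < 1) :
    ∑ i ∈ s, c i ^ k < n ^ k := by
  have hnk : (0 : ℝ) < (n : ℝ) ^ k := by positivity
  have : (∑ i ∈ s, c i ^ k : ℝ) < (n : ℝ) ^ k :=
    calc (∑ i ∈ s, c i ^ k : ℝ) ≤ ∑ _i ∈ s, (a * n) ^ k :=
          sum_le_sum fun i hi => pow_le_pow_left₀ (Nat.cast_nonneg _) (hc i hi) k
      _ = a ^ k * #s * (n : ℝ) ^ k := by rw [sum_const, nsmul_eq_mul, mul_pow]; ring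
      _ < 1 * (n : ℝ) ^ k := mul_lt_mul_of_pos_right hk hnk
      _ = (n : ℝ) ^ k := one_mul _
  exact_mod_cast this

theorem pow_le_inv_of_log_div_le {a x : ℝ} {k : ℕ} (ha0 : 0 < a) (ha1 : a < 1) (hx : 0 < x)
    (hk : Real.log x / -Real.log a ≤ k) : a ^ k ≤ x⁻¹ := by
  have hlog : 0 < -Real.log a := neg_pos.mpr (Real.log_neg ha0 ha1)
  have hk' : k * Real.log a ≤ -Real.log x := by
    rw [div_le_iff₀ hlog] at hk; linarith
  calc a ^ k = Real.exp (k * Real.log a) := by rw [Real.exp_nat_mul, Real.exp_log ha0]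
    _ ≤ Real.exp (-Real.log x) := Real.exp_le_exp.mpr hk'
    _ = x⁻¹ := by rw [Real.exp_neg, Real.exp_log hx]

theorem stmt_6_general {V : Type*} [Fintype V] (G : SimpleGraph V)
    (σ : ℝ) (hσ0 : 0 < σ) (hσ1 : σ < 1)
    (hsep : ∀ u v : V, u ≠ v →
      σ * Fintype.card V ≤
        ((Finset.univ.filter fun w : V => G.dist u w ≠ G.dist v w).card : ℝ)) :
    metricDim G ≤ ⌈2 * Real.log (Fintype.card V) / (-Real.log (1 - σ))⌉₊ := by
  set n := Fintype.card V
  set k := ⌈2 * Real.log n / (-Real.log (1 - σ))⌉₊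
  rcases n.eq_zero_or_pos with hn | hn
  · have : IsEmpty V := Fintype.card_eq_zero_iff.mp hn
    exact (G.metricDim_le_card (W := ∅) fun u => isEmptyElim u).trans (Nat.zero_le _)
  have hpairs : #(univ : Finset V).offDiag < n ^ 2 := by
    rw [offDiag_card, card_univ, sq]; exact Nat.sub_lt (Nat.mul_pos hn hn) hn
  have hmiss : (1 - σ) ^ k ≤ ((n : ℝ) ^ 2)⁻¹ := by
    refine pow_le_inv_of_log_div_le (by linarith) (by linarith) (by positivity) ?_
    rw [Real.log_pow, Nat.cast_ofNat]; exact Nat.le_ceil _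
  have hunion : (1 - σ) ^ k * #(univ : Finset V).offDiag < 1 :=
    calc (1 - σ) ^ k * #(univ : Finset V).offDiag
        ≤ ((n : ℝ) ^ 2)⁻¹ * #(univ : Finset V).offDiag := by gcongr
      _ < 1 := by rw [inv_mul_lt_one₀ (by positivity)]; exact_mod_cast hpairs
  obtain ⟨f, hf⟩ := exists_fun_forall_exists_notMem (univ : Finset V).offDiag
    (fun p => G.equidistantFinset p.1 p.2) k <| sum_pow_lt_pow_of_le_mul hn
      (fun p hp => G.card_equidistantFinset_le (hsep p.1 p.2 (mem_offDiag.mp hp).2.2)) hunion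
  refine (G.metricDim_le_card (W := univ.image f) fun u v huv => ?_).trans
    (card_image_le.trans_eq (card_fin k))
  obtain ⟨j, hj⟩ := hf (u, v) (by simpa using huv)
  exact ⟨f j, mem_image_of_mem f (mem_univ j), by simpa [SimpleGraph.equidistantFinset] using hj⟩

/-- If every pair of distinct vertices of `G` is separated by at least `σ n` vertices,
then `MD(G) ≤ ⌈2 log n / (-log (1 - σ))⌉`. -/
theorem stmt_6 {V : Type*} [Fintype V] (G : SimpleGraph V) (hG : G.Connected)
    (σ : ℝ) (hσ0 : 0 < σ) (hσ1 : σ < 1)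
    (hsep : ∀ u v : V, u ≠ v →
      σ * Fintype.card V ≤
        ((Finset.univ.filter fun w : V => G.dist u w ≠ G.dist v w).card : ℝ)) :
    metricDim G ≤ ⌈2 * Real.log (Fintype.card V) / (-Real.log (1 - σ))⌉₊ :=
  stmt_6_general G σ hσ0 hσ1 hsep
end
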